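/- If f : [-1,1]² → ℝ is continuous, of bounded variation in the sense of Vitali, has one bounded partial derivative, and its Chebyshev coefficient array satisfies ∑_{i,j} |c_{i,j}| < ∞, then the bivariate Chebyshev series ∑'_i ∑'_j c_{i,j} T_i(x) T_j(y) converges uniformly to f on [-1,1]². -/

import Mathlib

/-!
With `θ = (arccos x, arccos y)` the Chebyshev series becomes the double cosine series
`∑ w_i w_j c_{ij} cos(i θ₁) cos(j θ₂)` on `[0, π]²`. Absolute summability of the coefficients
makes it converge uniformly to a continuous function `G`, whose cosine coefficients can be computed
termwise: by orthogonality they are those of `F θ = f (cos θ₁) (cos θ₂)`. The products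
`cos(i θ₁) cos(j θ₂)` span a point-separating subalgebra of `C([0, π]², ℝ)`, so by
Stone–Weierstrass `F - G` is orthogonal to itself, hence `F = G` on the square.
-/

open MeasureTheory Real Finset

/-- Bivariate Chebyshev coefficient `c_{i,j}` of `f`. -/
noncomputable def cheb (f : ℝ → ℝ → ℝ) (i j : ℕ) : ℝ :=
  (4 / π ^ 2) * ∫ θx in (0:ℝ)..π, ∫ θy in (0:ℝ)..π,
    f (Real.cos θx) (Real.cos θy) * Real.cos (i * θx) * Real.cos (j * θy)

/-- Chebyshev polynomial `T_n` on `[-1,1]`. -/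
noncomputable def T (n : ℕ) (x : ℝ) : ℝ := Real.cos (n * Real.arccos x)

/-- Halving weight for the primed sums. -/
noncomputable def w (n : ℕ) : ℝ := if n = 0 then 1 / 2 else 1

/-- `f` is of bounded variation in the sense of Vitali on `[-1,1]²`: the sums of absolute
second-order mixed differences over all grid partitions of the square are uniformly bounded. -/
def BoundedVitaliVariation (f : ℝ → ℝ → ℝ) : Prop :=
  ∃ M : ℝ, ∀ (n m : ℕ) (x y : ℕ → ℝ), Monotone x → Monotone y →
    (∀ i, x i ∈ Set.Icc (-1:ℝ) 1) → (∀ j, y j ∈ Set.Icc (-1:ℝ) 1) →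
    (∑ i ∈ Finset.range n, ∑ j ∈ Finset.range m,
      |f (x (i+1)) (y (j+1)) - f (x (i+1)) (y j) - f (x i) (y (j+1)) + f (x i) (y j)|) ≤ M

open Filter

theorem integral_tsum_of_norm_le {ι α E : Type*} [Countable ι] [MeasurableSpace α]
    [NormedAddCommGroup E] [NormedSpace ℝ E] {μ : Measure α} [IsFiniteMeasure μ]
    {F : ι → α → E} {a : ι → ℝ} (hF : ∀ i, Integrable (F i) μ)
    (hFa : ∀ i x, ‖F i x‖ ≤ a i) (ha : Summable a) :
    ∫ x, ∑' i, F i x ∂μ = ∑' i, ∫ x, F i x ∂μ := by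
  refine (integral_tsum_of_summable_integral_norm hF ?_).symm
  refine (ha.mul_right (μ.real Set.univ)).of_nonneg_of_le
    (fun i => integral_nonneg fun x => norm_nonneg _) fun i => (le_abs_self _).trans ?_
  simpa using norm_integral_le_of_norm_le_const (μ := μ) (f := fun x => ‖F i x‖)
    (.of_forall fun x => by simpa using hFa i x)

section ContinuousMapIntegral

variable {X : Type*} [TopologicalSpace X] [CompactSpace X] [MeasurableSpace X]
  [OpensMeasurableSpace X] (μ : Measure X) [IsFiniteMeasure μ]

lemma ContinuousMap.integrable_of_compactSpace (g : C(X, ℝ)) : Integrable g μ :=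
  g.continuous.integrable_of_hasCompactSupport (.of_compactSpace g)

noncomputable def ContinuousMap.integralMulCLM (h : C(X, ℝ)) : C(X, ℝ) →L[ℝ] ℝ :=
  LinearMap.mkContinuous
    { toFun := fun g => ∫ x, h x * g x ∂μ
      map_add' := fun g₁ g₂ => by
        simp only [ContinuousMap.add_apply, mul_add]
        exact integral_add ((h * g₁).integrable_of_compactSpace μ)
          ((h * g₂).integrable_of_compactSpace μ)
      map_smul' := fun a g => by
        simp only [ContinuousMap.smul_apply, smul_eq_mul, mul_left_comm, integral_const_mul,
          RingHom.id_apply] }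
    (‖h‖ * μ.real Set.univ) fun g =>
      calc ‖∫ x, h x * g x ∂μ‖ ≤ ‖h‖ * ‖g‖ * μ.real Set.univ :=
            norm_integral_le_of_norm_le_const <| .of_forall fun x => by
              rw [norm_mul]
              exact mul_le_mul (h.norm_coe_le_norm x) (g.norm_coe_le_norm x) (norm_nonneg _)
                (norm_nonneg _)
        _ = ‖h‖ * μ.real Set.univ * ‖g‖ := by ring

@[simp]
lemma ContinuousMap.integralMulCLM_apply (h g : C(X, ℝ)) :
    h.integralMulCLM μ g = ∫ x, h x * g x ∂μ := rfl

end ContinuousMapIntegral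

lemma cos_natAbs_mul (k : ℤ) (t : ℝ) : cos (k.natAbs * t) = cos (k * t) := by
  rw [Nat.cast_natAbs, Int.cast_abs]
  rcases abs_choice (k : ℝ) with h | h <;> simp [h, neg_mul, cos_neg]

lemma cos_nat_mul_mul_cos_nat_mul (m n : ℕ) (t : ℝ) :
    cos (m * t) * cos (n * t) =
      (cos ((m + n : ℕ) * t) + cos (((m : ℤ) - n).natAbs * t)) / 2 := by
  rw [cos_natAbs_mul]
  push_cast
  rw [add_mul, sub_mul, cos_add, cos_sub]
  ring

lemma integral_cos_nat_mul (k : ℕ) :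
    ∫ t in (0:ℝ)..π, cos (k * t) = if k = 0 then π else 0 := by
  split_ifs with hk
  · simp [hk]
  · have hk' : (k : ℝ) ≠ 0 := by exact_mod_cast hk
    simp [intervalIntegral.integral_comp_mul_left (fun t => cos t) hk', sin_nat_mul_pi]

lemma integral_cos_nat_mul_mul_cos_nat_mul (m n : ℕ) :
    ∫ t in (0:ℝ)..π, cos (m * t) * cos (n * t) = if m = n then π / 2 / w n else 0 := by
  have hint : ∀ k : ℕ, IntervalIntegrable (fun t => cos (k * t)) volume 0 π := fun k =>
    (continuous_cos.comp (continuous_const_mul _)).intervalIntegrable _ _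
  simp_rw [cos_nat_mul_mul_cos_nat_mul, intervalIntegral.integral_div,
    intervalIntegral.integral_add (hint _) (hint _), integral_cos_nat_mul]
  rcases eq_or_ne m n with rfl | hmn
  · rcases eq_or_ne m 0 with rfl | hm <;> simp [w, *]
  · have hsum : m + n ≠ 0 := by omega
    have hdiff : ((m : ℤ) - n).natAbs ≠ 0 := by omega
    rw [if_neg hsum, if_neg hdiff, if_neg hmn, add_zero, zero_div]

def angleSquare : Set (ℝ × ℝ) := Set.Icc 0 π ×ˢ Set.Icc 0 π

lemma isCompact_angleSquare : IsCompact angleSquare := isCompact_Icc.prod isCompact_Icc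

lemma measurableSet_angleSquare : MeasurableSet angleSquare :=
  measurableSet_Icc.prod measurableSet_Icc

instance : CompactSpace angleSquare := isCompact_iff_compactSpace.1 isCompact_angleSquare

instance : IsFiniteMeasure (volume.restrict angleSquare) :=
  isFiniteMeasure_restrict.2 isCompact_angleSquare.measure_lt_top.ne

lemma angleSquare_subset_closure_interior : angleSquare ⊆ closure (interior angleSquare) := by
  rw [angleSquare, interior_prod_eq, closure_prod_eq, interior_Icc, closure_Ioo pi_ne_zero.symm]

lemma setIntegral_angleSquare {u : ℝ × ℝ → ℝ} (hu : Continuous u) :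
    ∫ θ in angleSquare, u θ = ∫ a in (0:ℝ)..π, ∫ b in (0:ℝ)..π, u (a, b) := by
  have hint : IntegrableOn u angleSquare :=
    hu.continuousOn.integrableOn_compact isCompact_angleSquare
  rw [angleSquare, Measure.volume_eq_prod] at hint ⊢
  rw [setIntegral_prod _ hint]
  simp only [intervalIntegral.integral_of_le pi_pos.le, integral_Icc_eq_integral_Ioc]

noncomputable def cosProd (q : ℕ × ℕ) (θ : ℝ × ℝ) : ℝ :=
  cos (q.1 * θ.1) * cos (q.2 * θ.2)

@[fun_prop]
lemma continuous_cosProd (q : ℕ × ℕ) : Continuous (cosProd q) := by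
  unfold cosProd; fun_prop

lemma integral_cosProd_mul_cosProd (q r : ℕ × ℕ) :
    ∫ θ in angleSquare, cosProd q θ * cosProd r θ
      = if q = r then π / 2 / w r.1 * (π / 2 / w r.2) else 0 := by
  rw [setIntegral_angleSquare (by fun_prop)]
  have hsplit : ∀ a b : ℝ, cosProd q (a, b) * cosProd r (a, b)
      = cos (q.1 * a) * cos (r.1 * a) * (cos (q.2 * b) * cos (r.2 * b)) := fun a b => by
    simp only [cosProd]; ring
  simp_rw [hsplit, intervalIntegral.integral_const_mul, intervalIntegral.integral_mul_const,
    integral_cos_nat_mul_mul_cos_nat_mul, Prod.ext_iff]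
  split_ifs <;> simp_all

lemma abs_w_le_one (n : ℕ) : |w n| ≤ 1 := by
  unfold w; split_ifs <;> norm_num

lemma abs_cosProd_le_one (q : ℕ × ℕ) (θ : ℝ × ℝ) : |cosProd q θ| ≤ 1 := by
  rw [cosProd, abs_mul]; exact mul_le_one₀ (abs_cos_le_one _) (abs_nonneg _) (abs_cos_le_one _)

section CosSeries

variable (c : ℕ → ℕ → ℝ)

noncomputable def cosTerm (q : ℕ × ℕ) (θ : ℝ × ℝ) : ℝ :=
  w q.1 * w q.2 * c q.1 q.2 * cosProd q θ

noncomputable def cosSeries (θ : ℝ × ℝ) : ℝ := ∑' q, cosTerm c q θ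

@[fun_prop]
lemma continuous_cosTerm (q : ℕ × ℕ) : Continuous (cosTerm c q) := by
  unfold cosTerm; fun_prop

lemma norm_cosTerm_le (q : ℕ × ℕ) (θ : ℝ × ℝ) : ‖cosTerm c q θ‖ ≤ |c q.1 q.2| :=
  calc ‖cosTerm c q θ‖ = |c q.1 q.2| * (|w q.1| * |w q.2| * |cosProd q θ|) := by
        rw [cosTerm, Real.norm_eq_abs, abs_mul, abs_mul, abs_mul]; ring
    _ ≤ |c q.1 q.2| * 1 := by
        gcongr
        exact mul_le_one₀ (mul_le_one₀ (abs_w_le_one _) (abs_nonneg _) (abs_w_le_one _))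
          (abs_nonneg _) (abs_cosProd_le_one q θ)
    _ = |c q.1 q.2| := mul_one _

variable {c} (hc : Summable fun q : ℕ × ℕ => |c q.1 q.2|)
include hc

lemma tendstoUniformly_cosSeries :
    TendstoUniformly (fun s θ => ∑ q ∈ s, cosTerm c q θ) (cosSeries c) atTop :=
  tendstoUniformly_tsum hc (norm_cosTerm_le c)

lemma continuous_cosSeries : Continuous (cosSeries c) :=
  (tendstoUniformly_cosSeries hc).continuous <| .of_forall fun s => by fun_prop

lemma integral_cosSeries_mul_cosProd (r : ℕ × ℕ) :
    ∫ θ in angleSquare, cosSeries c θ * cosProd r θ = π ^ 2 / 4 * c r.1 r.2 := by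
  have hbound : ∀ q θ, ‖cosTerm c q θ * cosProd r θ‖ ≤ |c q.1 q.2| := fun q θ => by
    rw [norm_mul, ← mul_one |c q.1 q.2|]
    exact mul_le_mul (norm_cosTerm_le c q θ) (abs_cosProd_le_one r θ) (norm_nonneg _)
      (abs_nonneg _)
  have hint : ∀ q, IntegrableOn (fun θ => cosTerm c q θ * cosProd r θ) angleSquare := fun q =>
    (by fun_prop : Continuous _).continuousOn.integrableOn_compact isCompact_angleSquare
  have hw : ∀ n, w n ≠ 0 := fun n => by unfold w; split_ifs <;> norm_num
  simp_rw [cosSeries, ← tsum_mul_right]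
  rw [integral_tsum_of_norm_le hint hbound hc, tsum_eq_single r fun q hq => ?_]
  · simp only [cosTerm, mul_assoc, integral_const_mul, integral_cosProd_mul_cosProd,
      ↓reduceIte]
    field_simp [hw]
    norm_num
  · simp only [cosTerm, mul_assoc, integral_const_mul, integral_cosProd_mul_cosProd, if_neg hq,
      mul_zero]

end CosSeries

lemma cosProd_mul_cosProd (q r : ℕ × ℕ) (θ : ℝ × ℝ) :
    cosProd q θ * cosProd r θ =
      (cosProd (q.1 + r.1, q.2 + r.2) θ + cosProd (q.1 + r.1, ((q.2 : ℤ) - r.2).natAbs) θ +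
        cosProd (((q.1 : ℤ) - r.1).natAbs, q.2 + r.2) θ +
        cosProd (((q.1 : ℤ) - r.1).natAbs, ((q.2 : ℤ) - r.2).natAbs) θ) / 4 := by
  simp only [cosProd]
  rw [mul_mul_mul_comm, cos_nat_mul_mul_cos_nat_mul, cos_nat_mul_mul_cos_nat_mul]
  ring

noncomputable def cosProdOn (q : ℕ × ℕ) : C(angleSquare, ℝ) :=
  ⟨fun θ => cosProd q θ, (continuous_cosProd q).comp continuous_subtype_val⟩

lemma cosProdOn_mul_cosProdOn_mem_span (q r : ℕ × ℕ) :
    cosProdOn q * cosProdOn r ∈ Submodule.span ℝ (Set.range cosProdOn) := by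
  have hmem : ∀ p, cosProdOn p ∈ Submodule.span ℝ (Set.range cosProdOn) := fun p =>
    Submodule.subset_span ⟨p, rfl⟩
  have hprod : cosProdOn q * cosProdOn r = (1 / 4 : ℝ) •
      (cosProdOn (q.1 + r.1, q.2 + r.2) + cosProdOn (q.1 + r.1, ((q.2 : ℤ) - r.2).natAbs) +
        cosProdOn (((q.1 : ℤ) - r.1).natAbs, q.2 + r.2) +
        cosProdOn (((q.1 : ℤ) - r.1).natAbs, ((q.2 : ℤ) - r.2).natAbs)) := by
    ext θ
    simp only [cosProdOn, ContinuousMap.mul_apply, ContinuousMap.smul_apply,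
      ContinuousMap.add_apply, ContinuousMap.coe_mk, smul_eq_mul, cosProd_mul_cosProd]
    ring
  rw [hprod]
  exact Submodule.smul_mem _ _ <| add_mem (add_mem (add_mem (hmem _) (hmem _)) (hmem _)) (hmem _)

lemma dense_span_cosProdOn :
    Dense (Submodule.span ℝ (Set.range cosProdOn) : Set C(angleSquare, ℝ)) := by
  set S := Submodule.span ℝ (Set.range cosProdOn)
  have hgen : ∀ q, cosProdOn q ∈ S := fun q => Submodule.subset_span ⟨q, rfl⟩
  have hone : (1 : C(angleSquare, ℝ)) ∈ S := by
    convert hgen (0, 0)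
    ext; simp [cosProdOn, cosProd]
  have hmul (g₁ g₂) (hg₁ : g₁ ∈ S) (hg₂ : g₂ ∈ S) : g₁ * g₂ ∈ S := by
    have := Submodule.mul_mem_mul hg₁ hg₂
    rw [Submodule.span_mul_span] at this
    refine Submodule.span_le.2 (Set.mul_subset_iff.2 ?_) this
    rintro _ ⟨q, rfl⟩ _ ⟨r, rfl⟩
    exact cosProdOn_mul_cosProdOn_mem_span q r
  let A := S.toSubalgebra hone hmul
  have hsep : A.SeparatesPoints := by
    intro x y hxy
    by_cases h₁ : (x : ℝ × ℝ).1 = (y : ℝ × ℝ).1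
    · refine ⟨cosProdOn (0, 1), ⟨_, hgen (0, 1), rfl⟩, fun h => hxy <| Subtype.ext <|
        Prod.ext h₁ <| injOn_cos x.2.2 y.2.2 ?_⟩
      simpa [cosProdOn, cosProd] using h
    · refine ⟨cosProdOn (1, 0), ⟨_, hgen (1, 0), rfl⟩,
        fun h => h₁ <| injOn_cos x.2.1 y.2.1 ?_⟩
      simpa [cosProdOn, cosProd] using h
  rw [dense_iff_closure_eq]
  exact congrArg SetLike.coe
    (ContinuousMap.subalgebra_topologicalClosure_eq_top_of_separatesPoints A hsep)

theorem eqOn_angleSquare_of_integral_mul_cosProd_eq {u v : ℝ × ℝ → ℝ} (hu : Continuous u)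
    (hv : Continuous v)
    (h : ∀ q, ∫ θ in angleSquare, u θ * cosProd q θ =
      ∫ θ in angleSquare, v θ * cosProd q θ) :
    Set.EqOn u v angleSquare := by
  set μ := volume.restrict angleSquare
  have hint : ∀ {g : ℝ × ℝ → ℝ}, Continuous g → Integrable g μ := fun hg =>
    hg.continuousOn.integrableOn_compact isCompact_angleSquare
  let D : C(angleSquare, ℝ) := ⟨fun θ => u θ - v θ, by fun_prop⟩
  have hcomap (g : ℝ × ℝ → ℝ) : ∫ θ : angleSquare, D θ * g θ ∂(μ.comap Subtype.val)
      = ∫ θ in angleSquare, (u θ - v θ) * g θ := by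
    have := integral_subtype_comap (μ := μ) measurableSet_angleSquare
      fun θ => (u θ - v θ) * g θ
    rwa [Measure.restrict_restrict_of_subset subset_rfl] at this
  -- Pairing with `u - v` is a continuous functional on `C(angleSquare, ℝ)` that vanishes on the
  -- dense span of the `cosProdOn q`, so it vanishes at `u - v` itself.
  have hD : D.integralMulCLM (μ.comap Subtype.val) = 0 :=
    ContinuousLinearMap.ext_on dense_span_cosProdOn <| by
      rintro _ ⟨q, rfl⟩
      have := hcomap (cosProd q)
      simp only [cosProdOn, ContinuousMap.integralMulCLM_apply, ContinuousMap.coe_mk,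
        zero_apply] at this ⊢
      simp_rw [this, sub_mul]
      rw [integral_sub (hint (by fun_prop)) (hint (by fun_prop)), h q, sub_self]
  have hsq : ∫ θ in angleSquare, (u θ - v θ) * (u θ - v θ) = 0 := by
    rw [← hcomap]; exact congr($hD D)
  have hae : (fun θ => u θ - v θ) =ᵐ[μ] 0 := by
    filter_upwards [(integral_eq_zero_iff_of_nonneg (fun θ => mul_self_nonneg _)
      (hint ((hu.sub hv).mul (hu.sub hv)))).1 hsq] with θ hθ
    exact mul_self_eq_zero.1 hθ
  intro θ hθ
  exact sub_eq_zero.1 (Measure.eqOn_of_ae_eq hae (by fun_prop) continuousOn_const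
    angleSquare_subset_closure_interior hθ)

lemma ContinuousOn.continuous_comp_cos {f : ℝ → ℝ → ℝ}
    (hf : ContinuousOn (fun p : ℝ × ℝ => f p.1 p.2) (Set.Icc (-1) 1 ×ˢ Set.Icc (-1) 1)) :
    Continuous fun θ : ℝ × ℝ => f (cos θ.1) (cos θ.2) :=
  hf.comp_continuous (f := fun θ : ℝ × ℝ => (cos θ.1, cos θ.2)) (by fun_prop) fun θ =>
    ⟨⟨neg_one_le_cos _, cos_le_one _⟩, ⟨neg_one_le_cos _, cos_le_one _⟩⟩

lemma integral_comp_cos_mul_cosProd {f : ℝ → ℝ → ℝ}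
    (hf : Continuous fun θ : ℝ × ℝ => f (cos θ.1) (cos θ.2)) (q : ℕ × ℕ) :
    ∫ θ in angleSquare, f (cos θ.1) (cos θ.2) * cosProd q θ =
      π ^ 2 / 4 * cheb f q.1 q.2 := by
  rw [setIntegral_angleSquare (u := fun θ => f (cos θ.1) (cos θ.2) * cosProd q θ)
    (hf.mul (continuous_cosProd q)), cheb]
  simp only [cosProd, ← mul_assoc]
  field_simp

lemma tendsto_range_succ_product_atTop :
    Tendsto (fun N : ℕ => range (N + 1) ×ˢ range (N + 1)) atTop atTop := by
  have h := tendsto_finset_range.comp (tendsto_add_atTop_nat 1)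
  exact tendsto_finsetProd_atTop.comp
    (prod_atTop_atTop_eq (α := Finset ℕ) (β := Finset ℕ) ▸ h.prodMk h)

theorem cheb_series_uniform_convergence_general
    (f : ℝ → ℝ → ℝ)
    (hcont : ContinuousOn (fun p : ℝ × ℝ => f p.1 p.2)
      (Set.Icc (-1:ℝ) 1 ×ˢ Set.Icc (-1:ℝ) 1))
    (hsum : Summable fun p : ℕ × ℕ => |cheb f p.1 p.2|) :
    TendstoUniformlyOn
      (fun N (p : ℝ × ℝ) => ∑ i ∈ Finset.range (N + 1), ∑ j ∈ Finset.range (N + 1),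
        w i * w j * cheb f i j * T i p.1 * T j p.2)
      (fun p : ℝ × ℝ => f p.1 p.2) Filter.atTop
      (Set.Icc (-1:ℝ) 1 ×ˢ Set.Icc (-1:ℝ) 1) := by
  have hF := hcont.continuous_comp_cos
  have hFG :
      Set.EqOn (fun θ : ℝ × ℝ => f (cos θ.1) (cos θ.2)) (cosSeries (cheb f)) angleSquare :=
    eqOn_angleSquare_of_integral_mul_cosProd_eq hF (continuous_cosSeries hsum) fun q => by
      rw [integral_comp_cos_mul_cosProd hF, integral_cosSeries_mul_cosProd hsum]
  let arccos₂ : ℝ × ℝ → ℝ × ℝ := fun p => (arccos p.1, arccos p.2)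
  have hunif : TendstoUniformly
      (fun N p => ∑ q ∈ range (N + 1) ×ˢ range (N + 1), cosTerm (cheb f) q (arccos₂ p))
      (cosSeries (cheb f) ∘ arccos₂) atTop := fun u hu =>
    tendsto_range_succ_product_atTop.eventually
      ((tendstoUniformly_cosSeries hsum).comp arccos₂ u hu)
  refine (hunif.tendstoUniformlyOn.congr (.of_forall fun N p _ => ?_)).congr_right
    fun p hp => ?_
  · simp only [sum_product, cosTerm, cosProd, T, arccos₂, mul_assoc]
  · have hθ : arccos₂ p ∈ angleSquare :=
      ⟨⟨arccos_nonneg _, arccos_le_pi _⟩, ⟨arccos_nonneg _, arccos_le_pi _⟩⟩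
    simp only [Function.comp_apply, ← hFG hθ, arccos₂, cos_arccos hp.1.1 hp.1.2,
      cos_arccos hp.2.1 hp.2.2]

theorem cheb_series_uniform_convergence
    (f : ℝ → ℝ → ℝ)
    (hcont : ContinuousOn (fun p : ℝ × ℝ => f p.1 p.2)
      (Set.Icc (-1:ℝ) 1 ×ˢ Set.Icc (-1:ℝ) 1))
    (hBV : BoundedVitaliVariation f)
    (hderiv : (∃ M : ℝ, ∀ x ∈ Set.Icc (-1:ℝ) 1, ∀ y ∈ Set.Icc (-1:ℝ) 1,
        |deriv (fun t => f t y) x| ≤ M) ∨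
      (∃ M : ℝ, ∀ x ∈ Set.Icc (-1:ℝ) 1, ∀ y ∈ Set.Icc (-1:ℝ) 1,
        |deriv (fun t => f x t) y| ≤ M))
    (hsum : Summable fun p : ℕ × ℕ => |cheb f p.1 p.2|) :
    TendstoUniformlyOn
      (fun N (p : ℝ × ℝ) => ∑ i ∈ Finset.range (N + 1), ∑ j ∈ Finset.range (N + 1),
        w i * w j * cheb f i j * T i p.1 * T j p.2)
      (fun p : ℝ × ℝ => f p.1 p.2) Filter.atTop
      (Set.Icc (-1:ℝ) 1 ×ˢ Set.Icc (-1:ℝ) 1) :=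
  cheb_series_uniform_convergence_general f hcont hsum
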